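/- Let G be a locally compact group, Ω₀ and Ω two open neighborhoods of the identity in G with compact closure. For a closed subgroup H of G with Haar measure m_H, define vol_Ω(H) = m_H(H ∩ Ω)⁻¹ (when positive and finite). Then there exist constants c₁, c₂ > 0, depending only on Ω₀ and Ω (not on H or m_H), such that c₁·vol_{Ω₀}(H) ≤ vol_Ω(H) ≤ c₂·vol_{Ω₀}(H) for every closed subgroup H with Haar measure m_H satisfying 0 < m_H(H ∩ Ω), m_H(H ∩ Ω₀) < ∞. -/

import Mathlib

/-!
Cover the compact closure of `Ω₀` by finitely many translates `g • O` of a neighbourhood `O` of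
the identity with `O⁻¹ * O ⊆ Ω`. If `g • O` meets `H` at some `h`, translating by `h⁻¹ ∈ H`
moves `H ∩ g • O` into `H ∩ Ω`, so `m (H ∩ Ω₀)` is at most the number of translates times
`m (H ∩ Ω)`. The same bound with the roles of `Ω₀` and `Ω` swapped gives the other inequality.
-/

open MeasureTheory Topology
open scoped ENNReal Pointwise

theorem ENNReal.inv_le_mul_inv_of_le_mul {a b c : ℝ≥0∞} (hc₀ : c ≠ 0) (hc : c ≠ ∞)
    (h : a ≤ c * b) : b⁻¹ ≤ c * a⁻¹ := by
  rw [← ENNReal.inv_mul_le_iff hc₀ hc, ← ENNReal.mul_inv (.inl hc₀) (.inl hc)]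
  exact ENNReal.inv_le_inv' h

theorem measure_subgroup_inter_smul_le {G : Type*} [Group G] [MeasurableSpace G]
    [MeasurableMul G] {H : Subgroup G} {m : Measure G}
    (hm : ∀ h ∈ H, m.map (h * ·) = m) {O B : Set G} (hOB : O⁻¹ * O ⊆ B) (g : G) :
    m ((H : Set G) ∩ g • O) ≤ m ((H : Set G) ∩ B) := by
  rcases Set.eq_empty_or_nonempty ((H : Set G) ∩ g • O) with hempty | ⟨_, hH, o, ho, rfl⟩
  · simp only [hempty, measure_empty, zero_le]
  have hH' : g * o ∈ H := hH
  calc m ((H : Set G) ∩ g • O)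
      = m ((g * o * ·) ⁻¹' ((H : Set G) ∩ g • O)) := by
        conv_lhs => rw [← hm _ hH']
        exact (measurableEmbedding_mulLeft _).map_apply m _
    _ ≤ m ((H : Set G) ∩ B) := by
        refine measure_mono fun x ⟨hxH, hxO⟩ => ⟨?_, ?_⟩
        · exact (H.mul_mem_cancel_left hH').1 hxH
        · obtain ⟨o', ho', hgo'⟩ := hxO
          have hx : x = o⁻¹ * o' := by
            have hgo' : g * o' = g * o * x := hgo'
            rw [← mul_left_cancel_iff (a := g * o), ← hgo']
            group
          exact hx ▸ hOB (Set.mul_mem_mul (Set.inv_mem_inv.2 ho) ho')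

theorem exists_forall_measure_subgroup_inter_le_mul {G : Type*} [Group G] [TopologicalSpace G]
    [IsTopologicalGroup G] [MeasurableSpace G] [MeasurableMul G] {A B : Set G}
    (hA : IsCompact (closure A)) (hB : B ∈ 𝓝 1) :
    ∃ n : ℕ, 0 < n ∧ ∀ (H : Subgroup G) (m : Measure G), (∀ h ∈ H, m.map (h * ·) = m) →
      m ((H : Set G) ∩ A) ≤ n * m ((H : Set G) ∩ B) := by
  obtain ⟨V, hV, hVB⟩ := exists_nhds_split_inv hB
  have hOB : V⁻¹⁻¹ * V⁻¹ ⊆ B := by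
    rintro _ ⟨x, hx, y, hy, rfl⟩
    rw [inv_inv] at hx
    simpa [div_eq_mul_inv] using hVB x hx y⁻¹ hy
  obtain ⟨t, -, hcover⟩ := hA.elim_nhds_subcover (fun g => g • V⁻¹)
    fun g _ => smul_mem_nhds_self.2 (inv_mem_nhds_one G hV)
  refine ⟨t.card + 1, t.card.succ_pos, fun H m hm => ?_⟩
  calc m ((H : Set G) ∩ A)
      ≤ m (⋃ g ∈ t, (H : Set G) ∩ g • V⁻¹) := by
        refine measure_mono fun x ⟨hxH, hxA⟩ => ?_
        obtain ⟨g, hg, hxg⟩ := Set.mem_iUnion₂.1 (hcover (subset_closure hxA))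
        exact Set.mem_iUnion₂.2 ⟨g, hg, hxH, hxg⟩
    _ ≤ ∑ g ∈ t, m ((H : Set G) ∩ g • V⁻¹) := measure_biUnion_finset_le t _
    _ ≤ t.card * m ((H : Set G) ∩ B) := by
        rw [← nsmul_eq_mul]
        exact Finset.sum_le_card_nsmul t _ _ fun g _ => measure_subgroup_inter_smul_le hm hOB g
    _ ≤ ((t.card + 1 : ℕ) : ℝ≥0∞) * m ((H : Set G) ∩ B) := by
        gcongr
        exact_mod_cast t.card.le_succ

theorem stmt0_general {G : Type*} [Group G] [TopologicalSpace G] [IsTopologicalGroup G]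
    [MeasurableSpace G] [BorelSpace G]
    (Om0 Om : Set G) (h₀open : IsOpen Om0) (hopen : IsOpen Om)
    (h₀mem : (1 : G) ∈ Om0) (hmem : (1 : G) ∈ Om)
    (h₀cpt : IsCompact (closure Om0)) (hcpt : IsCompact (closure Om)) :
    ∃ c₁ c₂ : ℝ≥0∞, 0 < c₁ ∧ c₁ < ⊤ ∧ 0 < c₂ ∧ c₂ < ⊤ ∧
      ∀ H : Subgroup G, IsClosed (H : Set G) →
        ∀ m : Measure G, m ((H : Set G)ᶜ) = 0 →
          (∀ h ∈ H, Measure.map (fun x => h * x) m = m) →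
          0 < m ((H : Set G) ∩ Om) → m ((H : Set G) ∩ Om) < ⊤ →
          0 < m ((H : Set G) ∩ Om0) → m ((H : Set G) ∩ Om0) < ⊤ →
          c₁ * (m ((H : Set G) ∩ Om0))⁻¹ ≤ (m ((H : Set G) ∩ Om))⁻¹ ∧
          (m ((H : Set G) ∩ Om))⁻¹ ≤ c₂ * (m ((H : Set G) ∩ Om0))⁻¹ := by
  obtain ⟨n₁, hn₁, h₁⟩ :=
    exists_forall_measure_subgroup_inter_le_mul h₀cpt (hopen.mem_nhds hmem)
  obtain ⟨n₂, hn₂, h₂⟩ :=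
    exists_forall_measure_subgroup_inter_le_mul hcpt (h₀open.mem_nhds h₀mem)
  have hn₁0 : (n₁ : ℝ≥0∞) ≠ 0 := by exact_mod_cast hn₁.ne'
  have hn₂0 : (n₂ : ℝ≥0∞) ≠ 0 := by exact_mod_cast hn₂.ne'
  refine ⟨(n₂ : ℝ≥0∞)⁻¹, n₁, ENNReal.inv_pos.2 (ENNReal.natCast_ne_top _),
    ENNReal.inv_lt_top.2 (pos_iff_ne_zero.2 hn₂0), pos_iff_ne_zero.2 hn₁0,
    ENNReal.natCast_lt_top _, fun H _ m _ hm _ _ _ _ => ⟨?_, ?_⟩⟩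
  · rw [ENNReal.inv_mul_le_iff hn₂0 (ENNReal.natCast_ne_top _)]
    exact ENNReal.inv_le_mul_inv_of_le_mul hn₂0 (ENNReal.natCast_ne_top _) (h₂ H m hm)
  · exact ENNReal.inv_le_mul_inv_of_le_mul hn₁0 (ENNReal.natCast_ne_top _) (h₁ H m hm)

/-- Comparability of the volume normalizations `vol_Om` and `vol_{Om0}` of closed subgroups
with Haar measure, uniformly over the subgroup. -/
theorem stmt0 {G : Type*} [Group G] [TopologicalSpace G] [IsTopologicalGroup G]
    [LocallyCompactSpace G] [MeasurableSpace G] [BorelSpace G]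
    (Om0 Om : Set G) (h₀open : IsOpen Om0) (hopen : IsOpen Om)
    (h₀mem : (1 : G) ∈ Om0) (hmem : (1 : G) ∈ Om)
    (h₀cpt : IsCompact (closure Om0)) (hcpt : IsCompact (closure Om)) :
    ∃ c₁ c₂ : ℝ≥0∞, 0 < c₁ ∧ c₁ < ⊤ ∧ 0 < c₂ ∧ c₂ < ⊤ ∧
      ∀ H : Subgroup G, IsClosed (H : Set G) →
        ∀ m : Measure G, m ((H : Set G)ᶜ) = 0 →
          (∀ h ∈ H, Measure.map (fun x => h * x) m = m) →
          0 < m ((H : Set G) ∩ Om) → m ((H : Set G) ∩ Om) < ⊤ →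
          0 < m ((H : Set G) ∩ Om0) → m ((H : Set G) ∩ Om0) < ⊤ →
          c₁ * (m ((H : Set G) ∩ Om0))⁻¹ ≤ (m ((H : Set G) ∩ Om))⁻¹ ∧
          (m ((H : Set G) ∩ Om))⁻¹ ≤ c₂ * (m ((H : Set G) ∩ Om0))⁻¹ :=
  stmt0_general Om0 Om h₀open hopen h₀mem hmem h₀cpt hcpt
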